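/- arXiv:2205.03380 — 2 statements merged into one kernel-verified Lean document; each statement's English description precedes it below -/
import Mathlib

section
/- Let A ∈ ℝ^{I1×I2×I3} be a third-order real tensor and let r1, r2 be positive integers. There exist a matrix X ∈ ℝ^{I1×r1}, matrices Y_{i2} ∈ ℝ^{r1×r2} for each i2 ∈ {1,…,I2}, and a matrix Z ∈ ℝ^{r2×I3} such that A(i1,i2,i3) = ∑_{p=1}^{r1} ∑_{q=1}^{r2} X(i1,p) · Y_{i2}(p,q) · Z(q,i3) for all indices (i1,i2,i3) if and only if rank(A_{(1)}) ≤ r1 and rank(A_{(3)}) ≤ r2. -/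
/-!
A factorization bounds both ranks because the mode-1 unfolding factors through `X` and the
mode-3 unfolding through `Zᵀ`. Conversely, a matrix `M` of rank at most `r` can be written as
`X * (P * M)` with `X` having `r` columns (`X * P` restricts to the identity on the column space).
Doing this for both unfoldings gives `A_j = X * (P * A_j) * Qᵀ * Zᵀ` for every mode-2 slice `A_j`
of `A`, so `Y_j = P * A_j * Qᵀ` is the middle factor.
-/

open Matrix

theorem Matrix.exists_mul_mul_eq_self_of_rank_le {K m n κ : Type*} [Field K] [Fintype m]
    [Fintype n] [Fintype κ] {M : Matrix m n K} (h : M.rank ≤ Fintype.card κ) :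
    ∃ (X : Matrix m κ K) (P : Matrix κ m K), X * (P * M) = M := by
  classical
  set V := LinearMap.range M.mulVecLin
  obtain ⟨ι, hι⟩ : ∃ ι : V →ₗ[K] κ → K, Function.Injective ι :=
    finrank_le_iff_exists_linearMap.1 (by rwa [Module.finrank_fintype_fun_eq_card])
  obtain ⟨ρ, hρ⟩ := ι.exists_leftInverse_of_injective (LinearMap.ker_eq_bot.2 hι)
  obtain ⟨π, hπ⟩ := V.subtype.exists_leftInverse_of_injective V.ker_subtype
  refine ⟨LinearMap.toMatrix' (V.subtype ∘ₗ ρ), LinearMap.toMatrix' (ι ∘ₗ π), ?_⟩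
  apply Matrix.toLin'.injective
  refine LinearMap.ext fun v => ?_
  have hπv : π (M *ᵥ v) = ⟨M *ᵥ v, LinearMap.mem_range_self _ v⟩ :=
    LinearMap.congr_fun hπ ⟨_, LinearMap.mem_range_self _ v⟩
  simp only [Matrix.toLin'_mul, Matrix.toLin'_toMatrix', LinearMap.comp_apply,
    Matrix.toLin'_apply, hπv]
  exact congrArg Subtype.val (LinearMap.congr_fun hρ _)

namespace Tensor3

variable {K ι₁ ι₂ ι₃ κ₁ κ₂ : Type*}

def unfold₁ (A : ι₁ → ι₂ → ι₃ → K) : Matrix ι₁ (ι₂ × ι₃) K :=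
  of fun i jk => A i jk.1 jk.2

def unfold₃ (A : ι₁ → ι₂ → ι₃ → K) : Matrix ι₃ (ι₁ × ι₂) K :=
  of fun k ij => A ij.1 ij.2 k

def slice₂ (A : ι₁ → ι₂ → ι₃ → K) (j : ι₂) : Matrix ι₁ ι₃ K :=
  of fun i k => A i j k

def ttProduct [NonUnitalNonAssocSemiring K] [Fintype κ₁] [Fintype κ₂] (X : Matrix ι₁ κ₁ K)
    (Y : ι₂ → Matrix κ₁ κ₂ K) (Z : Matrix κ₂ ι₃ K) : ι₁ → ι₂ → ι₃ → K :=
  fun i j k => ∑ p, ∑ q, X i p * Y j p q * Z q k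

theorem ext_slice₂ {A B : ι₁ → ι₂ → ι₃ → K} (h : ∀ j, slice₂ A j = slice₂ B j) : A = B :=
  funext fun i => funext fun j => funext fun k => congrFun (congrFun (h j) i) k

section CommSemiring

variable [CommSemiring K] [Fintype κ₁] [Fintype κ₂]

theorem unfold₁_ttProduct (X : Matrix ι₁ κ₁ K) (Y : ι₂ → Matrix κ₁ κ₂ K) (Z : Matrix κ₂ ι₃ K) :
    unfold₁ (ttProduct X Y Z) = X * of fun p jk => ∑ q, Y jk.1 p q * Z q jk.2 := by
  ext i jk
  simp only [unfold₁, ttProduct, of_apply, mul_apply, Finset.mul_sum, mul_assoc]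

theorem unfold₃_ttProduct (X : Matrix ι₁ κ₁ K) (Y : ι₂ → Matrix κ₁ κ₂ K) (Z : Matrix κ₂ ι₃ K) :
    unfold₃ (ttProduct X Y Z) = Zᵀ * of fun q ij => ∑ p, X ij.1 p * Y ij.2 p q := by
  ext k ij
  simp only [unfold₃, ttProduct, of_apply, mul_apply, transpose_apply, Finset.mul_sum]
  rw [Finset.sum_comm]
  refine Finset.sum_congr rfl fun q _ => Finset.sum_congr rfl fun p _ => ?_
  ring

theorem slice₂_ttProduct [Fintype ι₁] [Fintype ι₃] (X : Matrix ι₁ κ₁ K) (Y : ι₂ → Matrix κ₁ κ₂ K)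
    (Z : Matrix κ₂ ι₃ K) (j : ι₂) : slice₂ (ttProduct X Y Z) j = X * Y j * Z := by
  ext i k
  simp only [slice₂, ttProduct, of_apply, mul_apply, Finset.sum_mul]
  exact Finset.sum_comm

theorem slice₂_eq_of_unfold₁_eq [Fintype ι₁] {A : ι₁ → ι₂ → ι₃ → K} {X : Matrix ι₁ κ₁ K}
    {P : Matrix κ₁ ι₁ K} (h : X * (P * unfold₁ A) = unfold₁ A) (j : ι₂) :
    X * (P * slice₂ A j) = slice₂ A j := by
  ext i k
  simpa [unfold₁, slice₂, mul_apply] using congrFun (congrFun h i) (j, k)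

theorem slice₂_eq_of_unfold₃_eq [Fintype ι₃] {A : ι₁ → ι₂ → ι₃ → K} {Z : Matrix ι₃ κ₂ K}
    {Q : Matrix κ₂ ι₃ K} (h : Z * (Q * unfold₃ A) = unfold₃ A) (j : ι₂) :
    slice₂ A j * Qᵀ * Zᵀ = slice₂ A j := by
  ext i k
  simpa [unfold₃, slice₂, mul_apply, mul_comm] using congrFun (congrFun h k) (i, j)

theorem rank_unfold₁_ttProduct_le [StrongRankCondition K] [Fintype ι₂] [Fintype ι₃]
    (X : Matrix ι₁ κ₁ K) (Y : ι₂ → Matrix κ₁ κ₂ K) (Z : Matrix κ₂ ι₃ K) :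
    (unfold₁ (ttProduct X Y Z)).rank ≤ Fintype.card κ₁ := by
  rw [unfold₁_ttProduct]
  exact (rank_mul_le_left _ _).trans (rank_le_card_width X)

theorem rank_unfold₃_ttProduct_le [StrongRankCondition K] [Fintype ι₁] [Fintype ι₂]
    (X : Matrix ι₁ κ₁ K) (Y : ι₂ → Matrix κ₁ κ₂ K) (Z : Matrix κ₂ ι₃ K) :
    (unfold₃ (ttProduct X Y Z)).rank ≤ Fintype.card κ₂ := by
  rw [unfold₃_ttProduct]
  exact (rank_mul_le_left _ _).trans (rank_le_card_width Zᵀ)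

end CommSemiring

theorem exists_eq_ttProduct_iff [Field K] [Fintype ι₁] [Fintype ι₂] [Fintype ι₃] [Fintype κ₁]
    [Fintype κ₂] (A : ι₁ → ι₂ → ι₃ → K) :
    (∃ (X : Matrix ι₁ κ₁ K) (Y : ι₂ → Matrix κ₁ κ₂ K) (Z : Matrix κ₂ ι₃ K),
        A = ttProduct X Y Z) ↔
      (unfold₁ A).rank ≤ Fintype.card κ₁ ∧ (unfold₃ A).rank ≤ Fintype.card κ₂ := by
  constructor
  · rintro ⟨X, Y, Z, rfl⟩
    exact ⟨rank_unfold₁_ttProduct_le X Y Z, rank_unfold₃_ttProduct_le X Y Z⟩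
  · rintro ⟨h₁, h₃⟩
    obtain ⟨X, P, hX⟩ := exists_mul_mul_eq_self_of_rank_le h₁
    obtain ⟨Z, Q, hZ⟩ := exists_mul_mul_eq_self_of_rank_le h₃
    refine ⟨X, fun j => P * slice₂ A j * Qᵀ, Zᵀ, ext_slice₂ fun j => ?_⟩
    calc slice₂ A j = slice₂ A j * Qᵀ * Zᵀ := (slice₂_eq_of_unfold₃_eq hZ j).symm
      _ = X * (P * slice₂ A j) * Qᵀ * Zᵀ := by rw [slice₂_eq_of_unfold₁_eq hX]
      _ = slice₂ (ttProduct X (fun j => P * slice₂ A j * Qᵀ) Zᵀ) j := by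
        simp only [slice₂_ttProduct, Matrix.mul_assoc]

end Tensor3

open Tensor3 in
theorem mode2_TT_factorization_iff_rank_general {I1 I2 I3 r1 r2 : ℕ}
    (A : Fin I1 → Fin I2 → Fin I3 → ℝ) :
    (∃ (X : Matrix (Fin I1) (Fin r1) ℝ) (Y : Fin I2 → Matrix (Fin r1) (Fin r2) ℝ)
        (Z : Matrix (Fin r2) (Fin I3) ℝ),
        ∀ i1 i2 i3, A i1 i2 i3 = ∑ p, ∑ q, X i1 p * Y i2 p q * Z q i3) ↔
      (Matrix.rank (Matrix.of fun (i1 : Fin I1) (jk : Fin I2 × Fin I3) => A i1 jk.1 jk.2) ≤ r1 ∧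
       Matrix.rank (Matrix.of fun (i3 : Fin I3) (jk : Fin I1 × Fin I2) => A jk.1 jk.2 i3) ≤ r2) := by
  simpa only [funext_iff, ttProduct, unfold₁, unfold₃, Fintype.card_fin] using
    exists_eq_ttProduct_iff (κ₁ := Fin r1) (κ₂ := Fin r2) A

/-- A third-order tensor `A ∈ ℝ^{I1×I2×I3}` admits a mode-2 tensor train factorization
`A(i1,i2,i3) = ∑_{p,q} X(i1,p) · Y_{i2}(p,q) · Z(q,i3)` with ranks `(r1, r2)` if and only if
the mode-1 unfolding has rank at most `r1` and the mode-3 unfolding has rank at most `r2`. -/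
theorem mode2_TT_factorization_iff_rank {I1 I2 I3 r1 r2 : ℕ}
    (hr1 : 0 < r1) (hr2 : 0 < r2)
    (A : Fin I1 → Fin I2 → Fin I3 → ℝ) :
    (∃ (X : Matrix (Fin I1) (Fin r1) ℝ) (Y : Fin I2 → Matrix (Fin r1) (Fin r2) ℝ)
        (Z : Matrix (Fin r2) (Fin I3) ℝ),
        ∀ i1 i2 i3, A i1 i2 i3 = ∑ p, ∑ q, X i1 p * Y i2 p q * Z q i3) ↔
      (Matrix.rank (Matrix.of fun (i1 : Fin I1) (jk : Fin I2 × Fin I3) => A i1 jk.1 jk.2) ≤ r1 ∧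
       Matrix.rank (Matrix.of fun (i3 : Fin I3) (jk : Fin I1 × Fin I2) => A jk.1 jk.2 i3) ≤ r2) :=
  mode2_TT_factorization_iff_rank_general A
end

section
/- Let A ∈ ℝ^{I1×I2×I3} be a third-order real tensor and let r1, r2 be positive integers. There exist vectors x_{i3} ∈ ℝ^{r1} for each i3 ∈ {1,…,I3}, matrices Y_{i1} ∈ ℝ^{r1×r2} for each i1 ∈ {1,…,I1}, and vectors z_{i2} ∈ ℝ^{r2} for each i2 ∈ {1,…,I2} such that A(i1,i2,i3) = x_{i3}ᵀ Y_{i1} z_{i2} = ∑_{p=1}^{r1} ∑_{q=1}^{r2} x_{i3}(p) · Y_{i1}(p,q) · z_{i2}(q) for all indices (i1,i2,i3) if and only if rank(A_{(3)}) ≤ r1 and rank(A_{(2)}) ≤ r2. -/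
/-! A factorization of `A` writes the mode-3 unfolding as a product through `ℝ^{r1}` and the
mode-2 unfolding as a product through `ℝ^{r2}`, which bounds their ranks.

Conversely, factor the mode-2 unfolding as `Z * (L * A₍₂₎)`, with a right factor built from the
rows of `A₍₂₎`. Then `B = A ×₂ L` satisfies `B₍₃₎ = A₍₃₎ * (I ⊗ Lᵀ)`, so
`rank B₍₃₎ ≤ rank A₍₃₎ ≤ r1`, and a rank factorization `B₍₃₎ = X * Y` supplies the vectors `x` and
the matrices `Y i1`, while `Z` supplies the vectors `z`. -/

open Matrix

namespace Matrix

variable {K : Type*} [Field K] {m n : Type*} [Fintype m] [Fintype n]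

theorem exists_mul_mul_self_eq_self_of_rank_le {M : Matrix m n K} {r : ℕ} (h : M.rank ≤ r) :
    ∃ (C : Matrix m (Fin r) K) (L : Matrix (Fin r) m K), C * L * M = M := by
  classical
  set V := LinearMap.range M.mulVecLin
  obtain ⟨ι, hι⟩ : ∃ ι : V →ₗ[K] (Fin r → K), Function.Injective ι :=
    finrank_le_iff_exists_linearMap.1 (by simpa [rank] using h)
  obtain ⟨κ, hκ⟩ := ι.exists_leftInverse_of_injective (LinearMap.ker_eq_bot.2 hι)
  obtain ⟨π, hπ⟩ := V.subtype.exists_leftInverse_of_injective V.ker_subtype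
  refine ⟨LinearMap.toMatrix' (V.subtype ∘ₗ κ), LinearMap.toMatrix' (ι ∘ₗ π), ?_⟩
  refine toLin'.injective (LinearMap.ext fun v => ?_)
  have hv : M *ᵥ v ∈ V := ⟨v, rfl⟩
  have hκι : κ (ι (π (M *ᵥ v))) = π (M *ᵥ v) := LinearMap.congr_fun hκ _
  have hπv : π (M *ᵥ v) = ⟨M *ᵥ v, hv⟩ := LinearMap.congr_fun hπ ⟨_, hv⟩
  simp only [toLin'_mul, toLin'_toMatrix', LinearMap.comp_apply, toLin'_apply]
  rw [hκι, hπv, Submodule.subtype_apply]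

theorem rank_le_iff_exists_eq_sum_mul {M : Matrix m n K} {r : ℕ} :
    M.rank ≤ r ↔ ∃ (C : m → Fin r → K) (R : Fin r → n → K), ∀ i j, M i j = ∑ l, C i l * R l j := by
  constructor
  · intro h
    obtain ⟨C, L, hCL⟩ := exists_mul_mul_self_eq_self_of_rank_le h
    refine ⟨C, L * M, fun i j => ?_⟩
    rw [← mul_apply, ← Matrix.mul_assoc, hCL]
  · rintro ⟨C, R, hCR⟩
    have hM : M = of C * of R := by
      ext i j
      simp only [hCR, mul_apply, of_apply]
    calc M.rank ≤ (of C).rank := hM ▸ rank_mul_le_left _ _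
      _ ≤ Fintype.card (Fin r) := rank_le_card_width _
      _ = r := Fintype.card_fin r

end Matrix

section ThirdOrderTensor

open scoped Kronecker

variable {K : Type*} [Field K] {ι₁ ι₂ ι₃ κ : Type*} [Fintype ι₂]

def mode2Unfolding (A : ι₁ → ι₂ → ι₃ → K) : Matrix ι₂ (ι₁ × ι₃) K :=
  of fun i₂ j => A j.1 i₂ j.2

def mode3Unfolding (A : ι₁ → ι₂ → ι₃ → K) : Matrix ι₃ (ι₁ × ι₂) K :=
  of fun i₃ j => A j.1 j.2 i₃

/-- The mode-2 product `A ×₂ L`. -/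
def mode2Product (A : ι₁ → ι₂ → ι₃ → K) (L : Matrix κ ι₂ K) : ι₁ → κ → ι₃ → K :=
  fun i₁ q i₃ => ∑ i₂, L q i₂ * A i₁ i₂ i₃

theorem mode2Unfolding_mode2Product (A : ι₁ → ι₂ → ι₃ → K) (L : Matrix κ ι₂ K) :
    mode2Unfolding (mode2Product A L) = L * mode2Unfolding A := by
  ext q j
  simp [mode2Unfolding, mode2Product, Matrix.mul_apply]

theorem mode3Unfolding_mode2Product [Fintype ι₁] [DecidableEq ι₁] (A : ι₁ → ι₂ → ι₃ → K)
    (L : Matrix κ ι₂ K) :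
    mode3Unfolding (mode2Product A L) =
      mode3Unfolding A * (1 ⊗ₖ Lᵀ : Matrix (ι₁ × ι₂) (ι₁ × κ) K) := by
  ext i₃ ⟨i₁, q⟩
  rw [Matrix.mul_apply, Fintype.sum_prod_type]
  simp [mode3Unfolding, mode2Product, one_apply, mul_comm]

theorem rank_mode3Unfolding_mode2Product_le [Fintype ι₁] [Fintype κ] (A : ι₁ → ι₂ → ι₃ → K)
    (L : Matrix κ ι₂ K) :
    (mode3Unfolding (mode2Product A L)).rank ≤ (mode3Unfolding A).rank := by
  classical
  rw [mode3Unfolding_mode2Product]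
  exact rank_mul_le_left _ _

theorem exists_eq_sum_mul_mode2Product_of_rank_le [Fintype ι₁] [Fintype ι₃]
    (A : ι₁ → ι₂ → ι₃ → K) {r : ℕ} (h : (mode2Unfolding A).rank ≤ r) :
    ∃ (z : ι₂ → Fin r → K) (L : Matrix (Fin r) ι₂ K),
      ∀ i₁ i₂ i₃, A i₁ i₂ i₃ = ∑ q, z i₂ q * mode2Product A L i₁ q i₃ := by
  obtain ⟨Z, L, hZL⟩ := exists_mul_mul_self_eq_self_of_rank_le h
  refine ⟨Z, L, fun i₁ i₂ i₃ => ?_⟩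
  have := congr_fun (congr_fun hZL i₂) (i₁, i₃)
  rw [Matrix.mul_assoc, ← mode2Unfolding_mode2Product, Matrix.mul_apply] at this
  exact this.symm

end ThirdOrderTensor

theorem mode1_TT_factorization_iff_rank_general {I1 I2 I3 r1 r2 : ℕ}
    (A : Fin I1 → Fin I2 → Fin I3 → ℝ) :
    (∃ (x : Fin I3 → Fin r1 → ℝ) (Y : Fin I1 → Matrix (Fin r1) (Fin r2) ℝ)
        (z : Fin I2 → Fin r2 → ℝ),
        ∀ i1 i2 i3, A i1 i2 i3 = ∑ p, ∑ q, x i3 p * Y i1 p q * z i2 q) ↔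
      (Matrix.rank (Matrix.of fun (i3 : Fin I3) (jk : Fin I1 × Fin I2) => A jk.1 jk.2 i3) ≤ r1 ∧
       Matrix.rank (Matrix.of fun (i2 : Fin I2) (jk : Fin I1 × Fin I3) => A jk.1 i2 jk.2) ≤ r2) := by
  change _ ↔ (mode3Unfolding A).rank ≤ r1 ∧ (mode2Unfolding A).rank ≤ r2
  constructor
  · rintro ⟨x, Y, z, hA⟩
    refine ⟨rank_le_iff_exists_eq_sum_mul.2 ⟨x, fun p j => ∑ q, Y j.1 p q * z j.2 q, ?_⟩,
      rank_le_iff_exists_eq_sum_mul.2 ⟨z, fun q j => ∑ p, x j.2 p * Y j.1 p q, ?_⟩⟩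
    · intro i₃ j
      simp only [mode3Unfolding, of_apply, hA, Finset.mul_sum, mul_assoc]
    · intro i₂ j
      simp only [mode2Unfolding, of_apply, hA, Finset.mul_sum]
      rw [Finset.sum_comm]
      exact Finset.sum_congr rfl fun _ _ => Finset.sum_congr rfl fun _ _ => by ring
  · rintro ⟨h3, h2⟩
    obtain ⟨z, L, hA⟩ := exists_eq_sum_mul_mode2Product_of_rank_le A h2
    obtain ⟨x, Y, hB⟩ :=
      rank_le_iff_exists_eq_sum_mul.1 ((rank_mode3Unfolding_mode2Product_le A L).trans h3)
    refine ⟨x, fun i₁ => of fun p q => Y p (i₁, q), z, fun i₁ i₂ i₃ => ?_⟩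
    calc A i₁ i₂ i₃ = ∑ q, z i₂ q * ∑ p, x i₃ p * Y p (i₁, q) := by
          simp only [hA, ← hB]; rfl
      _ = _ := by
        simp only [Finset.mul_sum, of_apply]
        rw [Finset.sum_comm]
        exact Finset.sum_congr rfl fun _ _ => Finset.sum_congr rfl fun _ _ => by ring

/-- A third-order tensor `A ∈ ℝ^{I1×I2×I3}` admits a mode-1 tensor train factorization
`A(i1,i2,i3) = ∑_{p,q} x_{i3}(p) · Y_{i1}(p,q) · z_{i2}(q)` with ranks `(r1, r2)` if and only
if the mode-3 unfolding has rank at most `r1` and the mode-2 unfolding has rank at most `r2`. -/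
theorem mode1_TT_factorization_iff_rank {I1 I2 I3 r1 r2 : ℕ}
    (hr1 : 0 < r1) (hr2 : 0 < r2)
    (A : Fin I1 → Fin I2 → Fin I3 → ℝ) :
    (∃ (x : Fin I3 → Fin r1 → ℝ) (Y : Fin I1 → Matrix (Fin r1) (Fin r2) ℝ)
        (z : Fin I2 → Fin r2 → ℝ),
        ∀ i1 i2 i3, A i1 i2 i3 = ∑ p, ∑ q, x i3 p * Y i1 p q * z i2 q) ↔
      (Matrix.rank (Matrix.of fun (i3 : Fin I3) (jk : Fin I1 × Fin I2) => A jk.1 jk.2 i3) ≤ r1 ∧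
       Matrix.rank (Matrix.of fun (i2 : Fin I2) (jk : Fin I1 × Fin I3) => A jk.1 i2 jk.2) ≤ r2) :=
  mode1_TT_factorization_iff_rank_general A
end
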